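/- Let C_{X(1,2)} = Σ_j |j⟩⟨j|⊗X^j and C_{X(2,1)} = Σ_j X^j⊗|j⟩⟨j| on ℂ⁴⊗ℂ⁴, and H the d=4 Fourier transform. Then C_{X(1,2)} C_{X(2,1)}† C_{X(1,2)} (√i H applied twice on the second factor, i.e. 1⊗(√i H)²) = i·SWAP, where SWAP|j⟩|k⟩ = |k⟩|j⟩. -/

import Mathlib

open Matrix Complex Kronecker

noncomputable section

/-- Clock operator Z on ℂ⁴ : Z|j⟩ = i^j |j⟩. -/
def Zc : Matrix (Fin 4) (Fin 4) ℂ := Matrix.diagonal fun j => Complex.I ^ (j : ℕ)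

/-- Shift operator X on ℂ⁴ : X|j⟩ = |j+1 mod 4⟩. -/
def Xs : Matrix (Fin 4) (Fin 4) ℂ := Matrix.of fun j k => if j = k + 1 then 1 else 0

/-- The d = 4 Fourier transform H = ½ Σ_{jk} i^{jk}|j⟩⟨k|. -/
def Hgate : Matrix (Fin 4) (Fin 4) ℂ :=
  Matrix.of fun j k => (1 / 2 : ℂ) * Complex.I ^ ((j : ℕ) * (k : ℕ))

/-- Controlled-X gate C_X = Σ_j |j⟩⟨j| ⊗ X^j on two qudits. -/
def CX : Matrix (Fin 4 × Fin 4) (Fin 4 × Fin 4) ℂ :=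
  ∑ j : Fin 4, Matrix.single j j 1 ⊗ₖ (Xs ^ (j : ℕ))

/-- Controlled-Z gate C_Z = Σ_{j,k} i^{jk} |j⟩⟨j| ⊗ |k⟩⟨k| on two qudits. -/
def CZ : Matrix (Fin 4 × Fin 4) (Fin 4 × Fin 4) ℂ :=
  ∑ j : Fin 4, ∑ k : Fin 4, Complex.I ^ ((j : ℕ) * (k : ℕ)) •
    (Matrix.single j j 1 ⊗ₖ Matrix.single k k 1)

/-- Controlled-X with control on the second qudit: Σ_j X^j ⊗ |j⟩⟨j|. -/
def CX21 : Matrix (Fin 4 × Fin 4) (Fin 4 × Fin 4) ℂ :=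
  ∑ j : Fin 4, (Xs ^ (j : ℕ)) ⊗ₖ Matrix.single j j 1

/-- The SWAP gate on two qudits. -/
def SWAP : Matrix (Fin 4 × Fin 4) (Fin 4 × Fin 4) ℂ :=
  Matrix.of fun p q => if p.1 = q.2 ∧ p.2 = q.1 then 1 else 0


/-!
Every gate in the circuit is a permutation matrix up to a phase. On basis states
`C_{X(1,2)} |a, b⟩ = |a, b + a⟩`, `C_{X(2,1)}† |a, b⟩ = |a - b, b⟩`, and `(√i H)² = i P` where
`P |k⟩ = |-k⟩`, since `H²` is the parity operator. Following a basis state through the circuit,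
`(a, b) ↦ (a, -b) ↦ (a, a - b) ↦ (b, a - b) ↦ (b, a)`, which is the swap.

`σ.permMatrix` has its `1` in row `i` at column `σ i`, i.e. it maps `|σ i⟩` to `|i⟩`; the
permutations below are therefore the inverses of the basis maps above.
-/

open Equiv

namespace Matrix

variable {m n R : Type*} [DecidableEq m] [DecidableEq n]

lemma permMatrix_pow [Fintype n] [Semiring R] (σ : Perm n) (k : ℕ) :
    (σ ^ k).permMatrix R = σ.permMatrix R ^ k := by
  induction k with
  | zero => simp
  | succ k ih => rw [pow_succ', permMatrix_mul, ih, pow_succ]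

lemma permMatrix_kronecker_permMatrix [MulZeroOneClass R] (σ : Perm m) (τ : Perm n) :
    σ.permMatrix R ⊗ₖ τ.permMatrix R = Perm.permMatrix R (σ.prodCongr τ) := by
  ext ⟨a, b⟩ ⟨c, d⟩
  simp [PEquiv.toMatrix_apply, ← ite_and, and_comm]

lemma sum_single_kronecker_permMatrix [Fintype m] [NonAssocSemiring R] (σ : m → Perm n) :
    ∑ j, single j j (1 : R) ⊗ₖ (σ j).permMatrix R =
      Perm.permMatrix R (prodShear (Equiv.refl m) σ) := by
  ext ⟨a, b⟩ ⟨c, d⟩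
  rw [sum_apply, Fintype.sum_eq_single a fun j hj => by simp [hj]]
  simp [PEquiv.toMatrix_apply, single_apply, prodShear, ← ite_and, and_comm]

lemma sum_permMatrix_kronecker_single [Fintype m] [NonAssocSemiring R] (σ : m → Perm n) :
    ∑ j, (σ j).permMatrix R ⊗ₖ single j j (1 : R) =
      Perm.permMatrix R ((prodComm m n).permCongr (prodShear (Equiv.refl m) σ)) := by
  ext ⟨a, b⟩ ⟨c, d⟩
  rw [sum_apply, Fintype.sum_eq_single b fun j hj => by simp [hj]]
  simp [PEquiv.toMatrix_apply, single_apply, prodShear, ← ite_and, and_comm]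

end Matrix

lemma Xs_eq_permMatrix : Xs = (Equiv.addRight (-1)).permMatrix ℂ := by
  ext j k
  simp [Xs, PEquiv.toMatrix_apply, eq_add_neg_iff_add_eq, eq_comm]

open Fin.NatCast in
lemma Xs_pow_val (j : Fin 4) : Xs ^ (j : ℕ) = (Equiv.addRight (-j)).permMatrix ℂ := by
  rw [Xs_eq_permMatrix, ← Matrix.permMatrix_pow, nsmul_addRight, smul_neg, nsmul_one,
    Fin.cast_val_eq_self]

lemma CX_eq_permMatrix :
    CX = Perm.permMatrix ℂ (prodShear (Equiv.refl _) fun a => Equiv.addRight (-a)) := by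
  simp only [CX, Xs_pow_val, Matrix.sum_single_kronecker_permMatrix]

lemma CX21_eq_permMatrix : CX21 = Perm.permMatrix ℂ
    ((prodComm _ _).permCongr (prodShear (Equiv.refl _) fun b => Equiv.addRight (-b))) := by
  simp only [CX21, Xs_pow_val, Matrix.sum_permMatrix_kronecker_single]

lemma SWAP_eq_permMatrix : SWAP = Perm.permMatrix ℂ (prodComm (Fin 4) (Fin 4)) := by
  ext ⟨a, b⟩ ⟨c, d⟩
  simp [SWAP, PEquiv.toMatrix_apply, eq_comm, and_comm]

lemma Hgate_sq : Hgate ^ 2 = (Equiv.neg (Fin 4)).permMatrix ℂ := by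
  ext j k
  rw [sq, Matrix.mul_apply, Fin.sum_univ_four]
  fin_cases j <;> fin_cases k <;>
    simp +decide [Hgate, PEquiv.toMatrix_apply] <;> ring_nf <;> norm_num

lemma exp_pi_mul_I_div_four_sq : Complex.exp (Real.pi * Complex.I / 4) ^ 2 = Complex.I := by
  rw [← Complex.exp_nat_mul]
  convert Complex.exp_pi_div_two_mul_I using 2
  push_cast
  ring

theorem swap_from_controlled_X :
    CX * CX21ᴴ * CX * (1 ⊗ₖ (Complex.exp (Real.pi * Complex.I / 4) • Hgate) ^ 2)
      = Complex.I • SWAP := by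
  have phase : (1 ⊗ₖ (Complex.exp (Real.pi * Complex.I / 4) • Hgate)) ^ 2 =
      Complex.I • Perm.permMatrix ℂ ((Equiv.refl (Fin 4)).prodCongr (Equiv.neg (Fin 4))) := by
    rw [sq, ← Matrix.mul_kronecker_mul, one_mul, ← sq, smul_pow, exp_pi_mul_I_div_four_sq,
      Hgate_sq, Matrix.kronecker_smul, ← Matrix.permMatrix_refl,
      Matrix.permMatrix_kronecker_permMatrix]
  rw [phase, CX_eq_permMatrix, CX21_eq_permMatrix, Matrix.conjTranspose_permMatrix,
    Matrix.mul_smul, ← Matrix.permMatrix_mul, ← Matrix.permMatrix_mul, ← Matrix.permMatrix_mul,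
    SWAP_eq_permMatrix]
  congr 2
  ext ⟨a, b⟩ <;> simp [prodShear]
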